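/- arXiv:2506.01547 — 3 statements merged into one kernel-verified Lean document; each statement's English description precedes it below -/
import Mathlib

section
/- Let a_1, …, a_n be distinct elements of a field, and let B = {(a_i, a_j) : 1 ≤ i < j ≤ n} ⊂ K², a set of C(n,2) points. Then there is no nonzero polynomial f(x,y) of total degree at most n−2 vanishing at every point of B. Equivalently, the C(n,2)×C(n,2) interpolation matrix V_B whose rows evaluate the monomials of degree ≤ n−2 at the points of B has nonzero determinant. -/
open MvPolynomial

/-- A polynomial in one (mv) variable of total degree `< m` vanishing at `m` distinct
points is zero. -/
lemma mv_fin_one_eq_zero {K : Type*} [Field K] {m : ℕ} (b : Fin m → K)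
    (hb : Function.Injective b) (q : MvPolynomial (Fin 1) K)
    (hdeg : q.totalDegree < m)
    (hval : ∀ j, MvPolynomial.eval (fun _ => b j) q = 0) : q = 0 := by
  set φ : MvPolynomial (Fin 0) K →+* K := MvPolynomial.eval (Fin.elim0 : Fin 0 → K) with hφ
  have hφinj : Function.Injective φ := by
    intro x y hxy
    obtain ⟨cx, rfl⟩ := MvPolynomial.C_surjective (Fin 0) x
    obtain ⟨cy, rfl⟩ := MvPolynomial.C_surjective (Fin 0) y
    simpa [hφ] using hxy
  set Q : Polynomial K := Polynomial.map φ (MvPolynomial.finSuccEquiv K 0 q) with hQ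
  have hQdeg : Q.natDegree < m := by
    calc Q.natDegree ≤ (MvPolynomial.finSuccEquiv K 0 q).natDegree :=
          Polynomial.natDegree_map_le
      _ = q.degreeOf 0 := natDegree_finSuccEquiv q
      _ ≤ q.totalDegree := degreeOf_le_totalDegree q 0
      _ < m := hdeg
  have hQval : ∀ j, Q.eval (b j) = 0 := by
    intro j
    have h1 : (fun _ : Fin 1 => b j) = Fin.cons (b j) (Fin.elim0 : Fin 0 → K) := by
      funext i
      fin_cases i
      rfl
    have h2 := MvPolynomial.eval_eq_eval_mv_eval' (Fin.elim0 : Fin 0 → K) (b j) q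
    rw [← h1] at h2
    rw [hQ, ← h2]
    exact hval j
  have hQ0 : Q = 0 :=
    Polynomial.eq_zero_of_natDegree_lt_card_of_eval_eq_zero Q hb hQval
      (by simpa using hQdeg)
  have : MvPolynomial.finSuccEquiv K 0 q = 0 := by
    apply Polynomial.map_injective φ hφinj
    simpa using hQ0
  exact (map_eq_zero_iff _ (MvPolynomial.finSuccEquiv K 0).injective).mp this

/-- Multiplying by `X 0 - C c` raises total degree by at least one. -/
lemma deg_mul_X_sub {K : Type*} [CommRing K] (c : K) (g : MvPolynomial (Fin 2) K)
    (hg : g ≠ 0) :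
    g.totalDegree + 1 ≤ ((X 0 - C c) * g).totalDegree := by
  have hsup : g.support.Nonempty :=
    Finset.nonempty_iff_ne_empty.mpr (fun h => hg (support_eq_empty.mp h))
  obtain ⟨m, hm, hmd⟩ := Finset.exists_mem_eq_sup g.support hsup
    (fun s : Fin 2 →₀ ℕ => s.sum fun _ e => e)
  have htd : g.totalDegree = m.sum fun _ e => e := hmd
  set m' : Fin 2 →₀ ℕ := Finsupp.single 0 1 + m with hm'
  have hm'sum : (m'.sum fun _ e => e) = g.totalDegree + 1 := by
    rw [hm', Finsupp.sum_add_index' (fun _ => rfl) (fun _ _ _ => rfl),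
      Finsupp.sum_single_index rfl, htd]
    omega
  have hcoeffm' : coeff m' g = 0 := by
    have hlt : g.totalDegree < m'.sum fun _ e => e := by rw [hm'sum]; omega
    exact coeff_eq_zero_of_totalDegree_lt hlt
  have hcoeff : coeff m' ((X 0 - C c) * g) = coeff m g := by
    rw [sub_mul, coeff_sub, hm', coeff_X_mul, coeff_C_mul, ← hm', hcoeffm',
      mul_zero, sub_zero]
  have hmem : m' ∈ ((X 0 - C c) * g).support := by
    rw [mem_support_iff, hcoeff]
    exact mem_support_iff.mp hm
  have hfin := le_totalDegree hmem
  rw [hm'sum] at hfin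
  exact hfin

lemma finSuccEquiv_C' {K : Type*} [CommSemiring K] (x : K) :
    MvPolynomial.finSuccEquiv K 1 (C x) = Polynomial.C (C x) := by
  simp [MvPolynomial.finSuccEquiv_apply]

lemma aux_no_interp {K : Type*} [Field K] (n : ℕ) (hn : 2 ≤ n) :
    ∀ a : Fin n → K, Function.Injective a →
      ∀ f : MvPolynomial (Fin 2) K, f.totalDegree ≤ n - 2 →
        (∀ i j : Fin n, i < j → MvPolynomial.eval ![a i, a j] f = 0) → f = 0 := by
  induction n, hn using Nat.le_induction with
  | base =>
    intro a ha f hdeg hval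
    have h0 : f.totalDegree = 0 := Nat.le_zero.mp hdeg
    have hC : f = C (coeff 0 f) := by
      ext m
      rcases eq_or_ne m 0 with rfl | hm
      · simp [coeff_C]
      · rw [coeff_C, if_neg (fun h => hm h.symm)]
        by_contra hc
        obtain ⟨x, hx⟩ := Finsupp.ne_iff.mp hm
        exact hx (((totalDegree_eq_zero_iff _ f).mp h0) m (mem_support_iff.mpr hc) x)
    have := hval 0 1 (by decide)
    rw [hC] at this ⊢
    rw [eval_C] at this
    rw [this, map_zero]
  | succ n hn ih =>
    intro a ha f hdeg hval
    have hdeg' : f.totalDegree ≤ n - 1 := by omega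
    set F := MvPolynomial.finSuccEquiv K 1 f with hF
    set q : MvPolynomial (Fin 1) K := Polynomial.eval (C (a 0)) F with hq
    -- q vanishes at a 1, ..., a n
    have hq_eval : ∀ j : Fin n, MvPolynomial.eval (fun _ : Fin 1 => a j.succ) q = 0 := by
      intro j
      have hv := hval 0 j.succ (Fin.succ_pos j)
      have h1 : ![a 0, a j.succ] = Fin.cons (a 0) (fun _ : Fin 1 => a j.succ) := by
        funext i
        fin_cases i <;> rfl
      rw [h1, MvPolynomial.eval_eq_eval_mv_eval'] at hv
      have h2 : MvPolynomial.eval (fun _ : Fin 1 => a j.succ) q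
          = Polynomial.eval (a 0) (Polynomial.map (MvPolynomial.eval
              (fun _ : Fin 1 => a j.succ)) F) := by
        rw [hq, Polynomial.eval, Polynomial.eval_map, Polynomial.hom_eval₂]
        simp
      rw [h2]
      exact hv
    -- q has small total degree
    have hq_deg : q.totalDegree ≤ n - 1 := by
      rw [hq, Polynomial.eval_eq_sum_range]
      refine (totalDegree_finset_sum _ _).trans (Finset.sup_le fun i _ => ?_)
      rcases eq_or_ne (F.coeff i) 0 with h | h
      · simp [h]
      · refine (totalDegree_mul _ _).trans ?_
        have h1 : (F.coeff i).totalDegree ≤ n - 1 := by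
          have := totalDegree_coeff_finSuccEquiv_add_le f i h
          rw [← hF] at this
          omega
        have h2 : ((C (a 0) : MvPolynomial (Fin 1) K) ^ i).totalDegree = 0 := by
          refine Nat.le_zero.mp ((totalDegree_pow _ _).trans ?_)
          simp
        omega
    have hq0 : q = 0 := by
      refine mv_fin_one_eq_zero (fun j : Fin n => a j.succ)
        (fun x y hxy => Fin.succ_injective n (ha hxy)) q (by omega) hq_eval
    -- factor out (X 0 - C (a 0))
    have hdvd : Polynomial.X - Polynomial.C (C (a 0)) ∣ F :=
      Polynomial.dvd_iff_isRoot.mpr hq0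
    obtain ⟨G, hG⟩ := hdvd
    set g : MvPolynomial (Fin 2) K := (MvPolynomial.finSuccEquiv K 1).symm G with hg
    have hfg : f = (X 0 - C (a 0)) * g := by
      apply (MvPolynomial.finSuccEquiv K 1).injective
      rw [map_mul, map_sub, finSuccEquiv_X_zero, finSuccEquiv_C', hg,
        AlgEquiv.apply_symm_apply]
      exact hG
    rcases eq_or_ne g 0 with hg0 | hg0
    · rw [hfg, hg0, mul_zero]
    · have hgdeg : g.totalDegree ≤ n - 2 := by
        have h1 := deg_mul_X_sub (a 0) g hg0
        rw [← hfg] at h1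
        omega
      have hgval : ∀ i j : Fin n, i < j →
          MvPolynomial.eval ![a i.succ, a j.succ] g = 0 := by
        intro i j hij
        have hv := hval i.succ j.succ (Fin.succ_lt_succ_iff.mpr hij)
        rw [hfg, map_mul] at hv
        have hx : MvPolynomial.eval ![a i.succ, a j.succ] (X 0 - C (a 0))
            = a i.succ - a 0 := by simp
        rw [hx] at hv
        have hne : a i.succ - a 0 ≠ 0 := by
          intro h
          exact Fin.succ_ne_zero i (ha (sub_eq_zero.mp h))
        exact (mul_eq_zero.mp hv).resolve_left hne
      have := ih (fun i => a i.succ)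
        (fun x y hxy => Fin.succ_injective n (ha hxy)) g hgdeg hgval
      exact absurd this hg0

/-- For distinct `a_1,…,a_n` (`n ≥ 2`) and `B = {(a_i, a_j) : i < j}`, there is no nonzero
polynomial in two variables of total degree at most `n − 2` vanishing at every point of `B`
(equivalently, the interpolation matrix `V_B` has nonzero determinant). -/
theorem no_low_degree_interpolant {n : ℕ} {K : Type*} [Field K] (hn : 2 ≤ n)
    (a : Fin n → K) (ha : Function.Injective a) :
    ¬∃ f : MvPolynomial (Fin 2) K, f ≠ 0 ∧ f.totalDegree ≤ n - 2 ∧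
      ∀ i j : Fin n, i < j → MvPolynomial.eval ![a i, a j] f = 0 := by
  rintro ⟨f, hf0, hdeg, hval⟩
  exact hf0 (aux_no_interp n hn a ha f hdeg hval)
end

section
/- Let f(x,y) be a polynomial of total degree at most n−2 over a field, and let a_1,…,a_n be distinct field elements. If f(a_i, a_j) = 0 for all 1 ≤ i < j ≤ n, then f = 0. -/
open MvPolynomial

namespace LowDegreeVanishingAux

variable {K : Type*} [Field K]

/-- Multiplying by a variable raises total degree by one. -/
lemma totalDegree_mul_X {σ : Type*} (q : MvPolynomial σ K) (hq : q ≠ 0) (s : σ) :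
    (q * X s).totalDegree = q.totalDegree + 1 := by
  classical
  have hne : q.support.Nonempty :=
    Finset.nonempty_iff_ne_empty.2 (fun h => hq (MvPolynomial.support_eq_empty.1 h))
  rw [MvPolynomial.totalDegree, MvPolynomial.support_mul_X, Finset.sup_map,
    MvPolynomial.totalDegree]
  rw [← Finset.sup'_eq_sup hne, ← Finset.sup'_eq_sup hne]
  have key := Finset.comp_sup'_eq_sup'_comp (γ := ℕ) hne
      (f := fun m : σ →₀ ℕ => m.sum fun _ e => e) (fun k : ℕ => k + 1)
      (fun x y => (Nat.succ_max_succ x y).symm)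
  simp only [Function.comp] at key ⊢
  rw [key]
  apply Finset.sup'_congr hne rfl
  intro m hm
  simp only [addRightEmbedding_apply]
  rw [Finsupp.sum_add_index (by simp) (fun _ _ _ _ => rfl)]
  simp [Finsupp.sum_single_index]

lemma totalDegree_X_sub_C_mul (a : K) (q : MvPolynomial (Fin 2) K) (hq : q ≠ 0) :
    ((X 0 - C a) * q).totalDegree = q.totalDegree + 1 := by
  have h1 : (X 0 - C a) * q = q * X 0 - C a * q := by ring
  have h2 : (q * X 0).totalDegree = q.totalDegree + 1 := totalDegree_mul_X q hq 0
  have h3 : (C a * q).totalDegree ≤ q.totalDegree :=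
    (MvPolynomial.totalDegree_mul _ _).trans (by simp [MvPolynomial.totalDegree_C])
  apply le_antisymm
  · rw [h1]
    exact (MvPolynomial.totalDegree_sub _ _).trans (by simp [h2]; omega)
  · have h4 : q * X 0 = (X 0 - C a) * q + C a * q := by ring
    have h5 := h4 ▸ (MvPolynomial.totalDegree_add (((X 0) - C a) * q) (C a * q))
    rw [h2] at h5
    omega

lemma dvd_sub_aeval (a : K) (f : MvPolynomial (Fin 2) K) :
    (X 0 - C a) ∣ f - aeval ![C a, X 1] f := by
  induction f using MvPolynomial.induction_on with
  | C c => simp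
  | add p q hp hq =>
    rw [map_add]
    have : p + q - (aeval ![C a, X 1] p + aeval ![C a, X 1] q)
        = (p - aeval ![C a, X 1] p) + (q - aeval ![C a, X 1] q) := by ring
    rw [this]; exact dvd_add hp hq
  | mul_X p i hp =>
    rw [map_mul, aeval_X]
    fin_cases i
    · show X 0 - C a ∣ p * X 0 - aeval ![C a, X 1] p * ![C a, X 1] 0
      have : p * X 0 - aeval ![C a, X 1] p * ![C a, X 1] 0
          = (p - aeval ![C a, X 1] p) * X 0 + aeval ![C a, X 1] p * (X 0 - C a) := by
        simp [Matrix.cons_val_zero]; ring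
      rw [this]
      exact dvd_add (hp.mul_right _) (dvd_mul_left _ _)
    · show X 0 - C a ∣ p * X 1 - aeval ![C a, X 1] p * ![C a, X 1] 1
      have : p * X 1 - aeval ![C a, X 1] p * ![C a, X 1] 1
          = (p - aeval ![C a, X 1] p) * X 1 := by
        simp [Matrix.cons_val_one]; ring
      rw [this]
      exact hp.mul_right _

lemma natDegree_aeval_le (s : Fin 2 → Polynomial K) (hs : ∀ i, (s i).natDegree ≤ 1)
    (f : MvPolynomial (Fin 2) K) :
    (aeval s f).natDegree ≤ f.totalDegree := by
  rw [MvPolynomial.aeval_def, MvPolynomial.eval₂_eq']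
  apply Polynomial.natDegree_sum_le_of_forall_le
  intro m hm
  calc (algebraMap K (Polynomial K) (coeff m f) * ∏ i, s i ^ m i).natDegree
      ≤ (∏ i, s i ^ m i).natDegree := by
        simpa using Polynomial.natDegree_C_mul_le (coeff m f) _
    _ ≤ ∑ i, (s i ^ m i).natDegree := Polynomial.natDegree_prod_le _ _
    _ ≤ ∑ i, m i := by
        apply Finset.sum_le_sum
        intro i _
        exact (Polynomial.natDegree_pow_le).trans (by
          calc (m i) * (s i).natDegree ≤ m i * 1 := Nat.mul_le_mul_left _ (hs i)
          _ = m i := Nat.mul_one _)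
    _ ≤ f.totalDegree := by
        have := MvPolynomial.le_totalDegree hm
        rwa [Finsupp.sum_fintype _ _ (fun _ => rfl)] at this

lemma eval_aeval (s : Fin 2 → Polynomial K) (v : K) (f : MvPolynomial (Fin 2) K) :
    Polynomial.eval v (aeval s f) = eval (fun i => Polynomial.eval v (s i)) f := by
  have h := MvPolynomial.eval₂_comp_left (Polynomial.evalRingHom v)
    (algebraMap K (Polynomial K)) s f
  rw [MvPolynomial.aeval_def]
  refine h.trans ?_
  rw [show ((Polynomial.evalRingHom v).comp (algebraMap K (Polynomial K))) = RingHom.id K from by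
    ext x; simp]
  exact MvPolynomial.eval₂_id _

lemma main (n : ℕ) (hn : 2 ≤ n) : ∀ a : Fin n → K, Function.Injective a →
    ∀ f : MvPolynomial (Fin 2) K, f.totalDegree ≤ n - 2 →
    (∀ i j : Fin n, i < j → eval ![a i, a j] f = 0) → f = 0 := by
  induction n, hn using Nat.le_induction with
  | base =>
    intro a ha f hdeg hvan
    have hd0 : f.totalDegree = 0 := Nat.le_zero.mp hdeg
    have hC : f = C (coeff 0 f) := by
      ext m
      by_cases hm : m = 0
      · simp [hm]
      · rw [MvPolynomial.coeff_C, if_neg (fun h => hm h.symm)]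
        by_contra hne
        obtain ⟨x, hx⟩ : ∃ x, m x ≠ 0 := by
          by_contra hall
          push_neg at hall
          exact hm (Finsupp.ext hall)
        exact hx (((MvPolynomial.totalDegree_eq_zero_iff _ f).mp hd0) m
          (MvPolynomial.mem_support_iff.mpr hne) x)
    have := hvan 0 1 (by decide)
    rw [hC] at this ⊢
    rw [MvPolynomial.eval_C] at this
    rw [this, map_zero]
  | succ n hn ih =>
    intro a ha f hdeg hvan
    -- the univariate polynomial f(a 0, Y)
    set q : Polynomial K := aeval ![Polynomial.C (a 0), Polynomial.X] f with hq
    have hqdeg : q.natDegree ≤ f.totalDegree := by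
      apply natDegree_aeval_le
      intro i
      fin_cases i <;> simp
    have hqroot : ∀ j : Fin n, q.eval (a j.succ) = 0 := by
      intro j
      rw [hq, eval_aeval]
      have hfun : (fun i => Polynomial.eval (a j.succ) (![Polynomial.C (a 0), Polynomial.X] i))
          = ![a 0, a j.succ] := by
        funext i; fin_cases i <;> simp
      rw [hfun]
      exact hvan 0 j.succ (Fin.succ_pos j)
    have hq0 : q = 0 := by
      apply Polynomial.eq_zero_of_natDegree_lt_card_of_eval_eq_zero q
        (f := fun j : Fin n => a j.succ)
        (fun x y hxy => Fin.succ_injective n (ha hxy)) hqroot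
      rw [Fintype.card_fin]
      have : (n : ℕ) + 1 - 2 = n - 1 := by omega
      omega
    -- hence (X 0 - C (a 0)) divides f
    have hgzero : (aeval ![C (a 0), X 1] f : MvPolynomial (Fin 2) K) = 0 := by
      have hcomp : (Polynomial.aeval (X 1 : MvPolynomial (Fin 2) K)).comp
          (MvPolynomial.aeval ![Polynomial.C (a 0), Polynomial.X])
          = MvPolynomial.aeval (R := K) ![C (a 0), X 1] := by
        apply MvPolynomial.algHom_ext
        intro i
        fin_cases i <;> simp
      calc (aeval ![C (a 0), X 1] f : MvPolynomial (Fin 2) K)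
          = Polynomial.aeval (X 1 : MvPolynomial (Fin 2) K) q := by
            rw [← hcomp]; rfl
        _ = 0 := by rw [hq0, map_zero]
    have hdvd : (X 0 - C (a 0)) ∣ f := by
      have := dvd_sub_aeval (a 0) f
      rwa [hgzero, sub_zero] at this
    obtain ⟨f', hf'⟩ := hdvd
    by_cases hf'0 : f' = 0
    · rw [hf', hf'0, mul_zero]
    -- degree bound for f'
    have hdeg' : f'.totalDegree ≤ n - 2 := by
      have h1 := totalDegree_X_sub_C_mul (a 0) f' hf'0
      rw [← hf'] at h1
      omega
    -- vanishing for f'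
    have hvan' : ∀ i j : Fin n, i < j → eval ![a i.succ, a j.succ] f' = 0 := by
      intro i j hij
      have h0 := hvan i.succ j.succ (Fin.succ_lt_succ_iff.mpr hij)
      rw [hf', map_mul] at h0
      have hX : eval ![a i.succ, a j.succ] (X 0 - C (a 0) : MvPolynomial (Fin 2) K)
          = a i.succ - a 0 := by simp
      rw [hX] at h0
      have hne : a i.succ - a 0 ≠ 0 := by
        intro h
        exact (Fin.succ_ne_zero i) (ha (sub_eq_zero.mp h))
      exact (mul_eq_zero.mp h0).resolve_left hne
    have := ih (fun j : Fin n => a j.succ) (fun x y hxy => Fin.succ_injective n (ha hxy))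
      f' hdeg' hvan'
    rw [hf', this, mul_zero]

end LowDegreeVanishingAux

/-- If `f(x,y)` has total degree at most `n − 2` and vanishes at `(a_i, a_j)` for all
`1 ≤ i < j ≤ n`, where `a_1,…,a_n` (`n ≥ 2`) are distinct, then `f = 0`. -/
theorem low_degree_vanishing_eq_zero {n : ℕ} {K : Type*} [Field K] (hn : 2 ≤ n)
    (a : Fin n → K) (ha : Function.Injective a) (f : MvPolynomial (Fin 2) K)
    (hdeg : f.totalDegree ≤ n - 2)
    (hvan : ∀ i j : Fin n, i < j → MvPolynomial.eval ![a i, a j] f = 0) :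
    f = 0 :=
  LowDegreeVanishingAux.main n hn a ha f hdeg hvan
end

section
/- Let Q_1, Q_2 be binary quadratic forms over a field k of characteristic not 2. Then 16·Res(Q_1, Q_2) = Disc_{x_1,x_2}( Disc_{u,v}( x_1 Q_2(u,v) − x_2 Q_1(u,v) ) ), where the inner discriminant is taken of x_1Q_2 − x_2Q_1 viewed as a quadratic form in (u,v), yielding a quadratic form in (x_1, x_2), and the outer discriminant is taken in (x_1, x_2). -/
/-!
Expanding the inner discriminant of the pencil `x₁ Q₂ − x₂ Q₁` gives the binary quadratic
`Disc(Q₂) x₁² + (4(a₂b₀ + a₀b₂) − 2a₁b₁) x₁x₂ + Disc(Q₁) x₂²`, and the Sylvester determinant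
equals its Bezout form `(a₂b₀ − a₀b₂)² − (a₂b₁ − a₁b₂)(a₁b₀ − a₀b₁)`. After that the identity is
a polynomial identity with integer coefficients in the six coefficients of `Q₁`, `Q₂`.
-/

open MvPolynomial

/-- The resultant of two binary quadratics `a2 u² + a1 uv + a0 v²` and
`b2 u² + b1 uv + b0 v²`: the determinant of the 4×4 Sylvester matrix. -/
noncomputable def res2 {k : Type*} [CommRing k] (a2 a1 a0 b2 b1 b0 : k) : k :=
  Matrix.det !![a2, a1, a0, 0; 0, a2, a1, a0; b2, b1, b0, 0; 0, b2, b1, b0]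

/-- The discriminant `b² − 4ac` of a binary quadratic form `a u² + b uv + c v²`. -/
def disc2 {k : Type*} [CommRing k] (a b c : k) : k := b ^ 2 - 4 * a * c

theorem res2_eq_bezout {R : Type*} [CommRing R] (a2 a1 a0 b2 b1 b0 : R) :
    res2 a2 a1 a0 b2 b1 b0 =
      (a2 * b0 - a0 * b2) ^ 2 - (a2 * b1 - a1 * b2) * (a1 * b0 - a0 * b1) := by
  simp [res2, Matrix.det_succ_row_zero, Fin.sum_univ_succ, Fin.succAbove]
  ring

namespace MvPolynomial
variable {R : Type*} [CommSemiring R]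

noncomputable def binaryQuadratic (a b c : R) : MvPolynomial (Fin 2) R :=
  C a * X 0 ^ 2 + C b * (X 0 * X 1) + C c * X 1 ^ 2

variable (a b c : R)

theorem binaryQuadratic_eq_sum_monomial :
    binaryQuadratic a b c = monomial (Finsupp.single 0 2) a
      + monomial (Finsupp.single 0 1 + Finsupp.single 1 1) b + monomial (Finsupp.single 1 2) c := by
  rw [binaryQuadratic, X_pow_eq_monomial, X_pow_eq_monomial, X, X, monomial_mul]
  simp only [C_mul_monomial, mul_one]

theorem coeff_binaryQuadratic_sq_left :
    coeff (Finsupp.single 0 2) (binaryQuadratic a b c) = a := by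
  simp [binaryQuadratic_eq_sum_monomial, coeff_monomial, Finsupp.ext_iff, Fin.forall_fin_two]

theorem coeff_binaryQuadratic_mixed :
    coeff (Finsupp.single 0 1 + Finsupp.single 1 1) (binaryQuadratic a b c) = b := by
  simp [binaryQuadratic_eq_sum_monomial, coeff_monomial, Finsupp.ext_iff, Fin.forall_fin_two]

theorem coeff_binaryQuadratic_sq_right :
    coeff (Finsupp.single 1 2) (binaryQuadratic a b c) = c := by
  simp [binaryQuadratic_eq_sum_monomial, coeff_monomial, Finsupp.ext_iff, Fin.forall_fin_two]

end MvPolynomial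

theorem disc_pencil_eq_binaryQuadratic {R : Type*} [CommRing R] (a2 a1 a0 b2 b1 b0 : R) :
    ((X 0 * C b1 - X 1 * C a1) ^ 2 - 4 * (X 0 * C b2 - X 1 * C a2) * (X 0 * C b0 - X 1 * C a0)
      : MvPolynomial (Fin 2) R) =
      binaryQuadratic (disc2 b2 b1 b0) (4 * (a2 * b0 + a0 * b2) - 2 * a1 * b1) (disc2 a2 a1 a0) := by
  simp only [binaryQuadratic, disc2, map_sub, map_mul, map_add, map_pow, map_ofNat]
  ring

theorem sixteen_res2_eq_double_disc_general {k : Type*} [Field k]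
    (a2 a1 a0 b2 b1 b0 : k) :
    letI D : MvPolynomial (Fin 2) k :=
      (X 0 * C b1 - X 1 * C a1) ^ 2 - 4 * (X 0 * C b2 - X 1 * C a2) * (X 0 * C b0 - X 1 * C a0)
    16 * res2 a2 a1 a0 b2 b1 b0 =
      disc2 (MvPolynomial.coeff (Finsupp.single (0 : Fin 2) 2) D)
        (MvPolynomial.coeff (Finsupp.single (0 : Fin 2) 1 + Finsupp.single (1 : Fin 2) 1) D)
        (MvPolynomial.coeff (Finsupp.single (1 : Fin 2) 2) D) := by
  rw [disc_pencil_eq_binaryQuadratic, coeff_binaryQuadratic_sq_left, coeff_binaryQuadratic_mixed,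
    coeff_binaryQuadratic_sq_right, res2_eq_bezout]
  simp only [disc2]
  ring

/-- For binary quadratics `Q_1 = a2 u² + a1 uv + a0 v²` and `Q_2 = b2 u² + b1 uv + b0 v²`
over a field of characteristic not 2:
`16·Res(Q_1,Q_2) = Disc_{x_1,x_2}(Disc_{u,v}(x_1 Q_2 − x_2 Q_1))`, where the inner
discriminant of `x_1 Q_2 − x_2 Q_1` (a quadratic form in `(u,v)`) is a quadratic form `D`
in `(x_1, x_2)` and the outer discriminant is taken in `(x_1, x_2)`. -/
theorem sixteen_res2_eq_double_disc {k : Type*} [Field k] (hchar : (2 : k) ≠ 0)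
    (a2 a1 a0 b2 b1 b0 : k) :
    letI D : MvPolynomial (Fin 2) k :=
      (X 0 * C b1 - X 1 * C a1) ^ 2 - 4 * (X 0 * C b2 - X 1 * C a2) * (X 0 * C b0 - X 1 * C a0)
    16 * res2 a2 a1 a0 b2 b1 b0 =
      disc2 (MvPolynomial.coeff (Finsupp.single (0 : Fin 2) 2) D)
        (MvPolynomial.coeff (Finsupp.single (0 : Fin 2) 1 + Finsupp.single (1 : Fin 2) 1) D)
        (MvPolynomial.coeff (Finsupp.single (1 : Fin 2) 2) D) :=
  sixteen_res2_eq_double_disc_general a2 a1 a0 b2 b1 b0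
end
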